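/- arXiv:2009.09340 — 2 statements merged into one kernel-verified Lean document; each statement's English description precedes it below -/
import Mathlib

section
/- Let n ≥ 1, let d be a positive integer, let c ∈ F_q^* and b ∈ F_q, and let N be the number of pairs (x, y) ∈ F_q × F_q satisfying x^d + c·y^d = b and (x+1)^d + c^{−1}·(y+1)^d = b. Then 2^{2n}·N = Σ_{α, β ∈ F_q} χ1(b·(α + β)) · T(α, β) · T(c·α, c^{−1}·β), where T(α, β) = Σ_{x ∈ F_q} χ1(α·x^d + β·(x+1)^d). -/
/-!
Fourier inversion on `F_q`: since `χ1` is a nontrivial, hence primitive, additive character,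
`Σ_α χ1(α u)` is `q` or `0` according as `u = 0` or not. Detecting both equations of the system
this way writes `q² N` as `Σ_{α,β} Σ_{x,y} χ1(α (x^d + c y^d + b)) χ1(β ((x+1)^d + c⁻¹ (y+1)^d + b))`
(in characteristic 2, `u = b ↔ u + b = 0`), and by additivity of `χ1` the inner sum separates into
`χ1(b(α+β)) T(α,β) T(cα, c⁻¹β)`.
-/

/-- The absolute trace map `Tr : F → F_2`, viewed inside `F` (its values lie in `{0,1}`),
for a field `F` with `2^n` elements. -/
def absTr (n : ℕ) {F : Type*} [Field F] (x : F) : F :=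
  ∑ i ∈ Finset.range n, x ^ (2 ^ i)

/-- The canonical additive character `χ1(x) = (−1)^{Tr(x)} ∈ ℤ`. -/
def chi (n : ℕ) {F : Type*} [Field F] [DecidableEq F] (x : F) : ℤ :=
  if absTr n x = 0 then 1 else -1

open Finset

section AbsTr

variable {n : ℕ} {F : Type*} [Field F]

lemma absTr_zero : absTr n (0 : F) = 0 :=
  sum_eq_zero fun _ _ => zero_pow (by positivity)

lemma absTr_add [CharP F 2] (x y : F) : absTr n (x + y) = absTr n x + absTr n y := by
  simp only [absTr, ← sum_add_distrib, add_pow_char_pow]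

lemma absTr_sq [CharP F 2] {x : F} (hx : x ^ 2 ^ n = x) : absTr n x ^ 2 = absTr n x := by
  have hshift : ∑ i ∈ range n, x ^ 2 ^ (i + 1) + x ^ 2 ^ 0 = absTr n x + x ^ 2 ^ n := by
    exact (sum_range_succ' (fun i => x ^ 2 ^ i) n).symm.trans (sum_range_succ _ n)
  rw [hx, pow_zero, pow_one, add_left_inj] at hshift
  simp only [absTr, sum_pow_char, ← pow_mul, ← pow_succ, hshift]

lemma absTr_eq_zero_or_one [Fintype F] [CharP F 2] (hcard : Fintype.card F = 2 ^ n) (x : F) :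
    absTr n x = 0 ∨ absTr n x = 1 :=
  IsIdempotentElem.iff_eq_zero_or_one.mp <| by
    rw [IsIdempotentElem, ← sq, absTr_sq (hcard ▸ FiniteField.pow_card x)]

/-- `absTr n` is evaluation of `Σ_{i<n} X^{2^i}`, a nonzero polynomial of degree `2^{n-1} < q`. -/
lemma exists_absTr_ne_zero [Fintype F] (hn : 1 ≤ n) (hcard : Fintype.card F = 2 ^ n) :
    ∃ s : F, absTr n s ≠ 0 := by
  by_contra! h
  set p : Polynomial F := ∑ i ∈ range n, Polynomial.X ^ 2 ^ i
  have hdeg : p.natDegree < Fintype.card F := by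
    refine lt_of_le_of_lt (Polynomial.natDegree_sum_le_of_forall_le _ _ (n := 2 ^ (n - 1))
      fun i hi => ?_) (hcard ▸ Nat.pow_lt_pow_right one_lt_two (by omega))
    rw [Polynomial.natDegree_X_pow]
    exact Nat.pow_le_pow_right two_pos (by have := mem_range.mp hi; omega)
  have hp : p = 0 := Polynomial.eq_zero_of_natDegree_lt_card_of_eval_eq_zero p
    Function.injective_id (fun s => by simpa [p, Polynomial.eval_finsetSum, absTr] using h s) hdeg
  have hcoeff : p.coeff 1 = 1 := by
    rw [Polynomial.finsetSum_coeff, sum_eq_single_of_mem 0 (mem_range.mpr hn)]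
    · simp
    · intro i _ hi
      have : 2 ^ i ≠ 1 := (Nat.one_lt_two_pow hi).ne'
      simp [Polynomial.coeff_X_pow, this.symm]
  simp [hp] at hcoeff

end AbsTr

section Chi

variable {n : ℕ} {F : Type*} [Field F] [Fintype F] [DecidableEq F] [CharP F 2]

lemma chi_add (hcard : Fintype.card F = 2 ^ n) (x y : F) :
    chi n (x + y) = chi n x * chi n y := by
  unfold chi
  rw [absTr_add]
  rcases absTr_eq_zero_or_one hcard x with hx | hx <;>
    rcases absTr_eq_zero_or_one hcard y with hy | hy <;>
    simp [hx, hy, CharTwo.add_self_eq_zero]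

def chiAddChar (hcard : Fintype.card F = 2 ^ n) : AddChar F ℤ where
  toFun := chi n
  map_zero_eq_one' := by simp [chi, absTr_zero]
  map_add_eq_mul' := chi_add hcard

lemma chiAddChar_isPrimitive (hn : 1 ≤ n) (hcard : Fintype.card F = 2 ^ n) :
    (chiAddChar hcard).IsPrimitive := by
  refine AddChar.IsPrimitive.of_ne_one fun h => ?_
  obtain ⟨s, hs⟩ := exists_absTr_ne_zero hn hcard
  have hs1 : chiAddChar hcard s = 1 := by rw [h, AddChar.one_apply]
  simp [chiAddChar, chi, hs] at hs1

end Chi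

section Counting

variable {R R' : Type*} [CommRing R] [Fintype R] [DecidableEq R] [CommRing R'] [IsDomain R']

theorem AddChar.IsPrimitive.card_sq_mul_card_common_zeros {ψ : AddChar R R'} (hψ : ψ.IsPrimitive)
    {ι : Type*} [Fintype ι] (f g : ι → R) :
    (Fintype.card R : R') ^ 2 * #{i | f i = 0 ∧ g i = 0} =
      ∑ α : R, ∑ β : R, ∑ i, ψ (α * f i) * ψ (β * g i) := by
  have hfactor : ∀ i, (∑ α : R, ψ (α * f i)) * ∑ β : R, ψ (β * g i) =
      if f i = 0 ∧ g i = 0 then (Fintype.card R : R') ^ 2 else 0 := fun i => by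
    rw [AddChar.sum_mulShift _ hψ, AddChar.sum_mulShift _ hψ]
    push_cast
    rw [ite_zero_mul_ite_zero, sq]
  calc _ = ∑ i, if f i = 0 ∧ g i = 0 then (Fintype.card R : R') ^ 2 else 0 := by
        rw [sum_ite, sum_const_zero, add_zero, sum_const, nsmul_eq_mul, mul_comm]
    _ = ∑ i, (∑ α : R, ψ (α * f i)) * ∑ β : R, ψ (β * g i) := by simp only [hfactor]
    _ = _ := by
        simp only [sum_mul_sum]
        rw [sum_comm]
        exact sum_congr rfl fun α _ => sum_comm

end Counting

lemma AddChar.sum_boomerang_system_eq {F R' : Type*} [Field F] [Fintype F] [CommRing R']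
    (ψ : AddChar F R') (d : ℕ) (c b α β : F) :
    ∑ p : F × F, ψ (α * (p.1 ^ d + c * p.2 ^ d + b)) *
        ψ (β * ((p.1 + 1) ^ d + c⁻¹ * (p.2 + 1) ^ d + b)) =
      ψ (b * (α + β)) * (∑ x : F, ψ (α * x ^ d + β * (x + 1) ^ d)) *
        ∑ y : F, ψ (c * α * y ^ d + c⁻¹ * β * (y + 1) ^ d) := by
  rw [Fintype.sum_prod_type, mul_assoc, sum_mul_sum, mul_sum]
  refine sum_congr rfl fun x _ => ?_
  rw [mul_sum]
  refine sum_congr rfl fun y _ => ?_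
  rw [← AddChar.map_add_eq_mul, ← AddChar.map_add_eq_mul, ← AddChar.map_add_eq_mul]
  ring_nf

theorem cBCT_entry_as_double_weil_sum_general (n d : ℕ) (hn : 1 ≤ n)
    {F : Type*} [Field F] [Fintype F] [DecidableEq F] [CharP F 2]
    (hcard : Fintype.card F = 2 ^ n)
    (c b : F) :
    (2 ^ (2 * n) : ℤ) *
        ((Finset.univ.filter fun p : F × F =>
            p.1 ^ d + c * p.2 ^ d = b ∧
            (p.1 + 1) ^ d + c⁻¹ * (p.2 + 1) ^ d = b).card : ℤ) =
      ∑ α : F, ∑ β : F,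
        chi n (b * (α + β)) *
          (∑ x : F, chi n (α * x ^ d + β * (x + 1) ^ d)) *
          (∑ x : F, chi n (c * α * x ^ d + c⁻¹ * β * (x + 1) ^ d)) := by
  have hsystem : (univ.filter fun p : F × F =>
      p.1 ^ d + c * p.2 ^ d = b ∧ (p.1 + 1) ^ d + c⁻¹ * (p.2 + 1) ^ d = b) =
      univ.filter fun p : F × F =>
        p.1 ^ d + c * p.2 ^ d + b = 0 ∧ (p.1 + 1) ^ d + c⁻¹ * (p.2 + 1) ^ d + b = 0 := by
    simp only [CharTwo.add_eq_zero]
  calc (2 ^ (2 * n) : ℤ) * _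
      = (Fintype.card F : ℤ) ^ 2 * #(univ.filter fun p : F × F =>
          p.1 ^ d + c * p.2 ^ d + b = 0 ∧ (p.1 + 1) ^ d + c⁻¹ * (p.2 + 1) ^ d + b = 0) := by
        rw [hsystem, hcard]; push_cast; ring
    _ = _ := (chiAddChar_isPrimitive hn hcard).card_sq_mul_card_common_zeros _ _
    _ = _ := by simp only [AddChar.sum_boomerang_system_eq]; rfl

/-- For a power map `x ↦ x^d` on the field `F` with `2^n` elements, `c ≠ 0` and `b`:
`2^{2n} · N = Σ_{α,β} χ1(b(α+β)) T(α,β) T(cα, c⁻¹β)`, where `N` is the `c`-BCT entry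
at `(1,b)` and `T(α,β) = Σ_x χ1(α x^d + β (x+1)^d)`. -/
theorem cBCT_entry_as_double_weil_sum (n d : ℕ) (hn : 1 ≤ n) (hd : 0 < d)
    {F : Type*} [Field F] [Fintype F] [DecidableEq F] [CharP F 2]
    (hcard : Fintype.card F = 2 ^ n)
    (c b : F) (hc : c ≠ 0) :
    (2 ^ (2 * n) : ℤ) *
        ((Finset.univ.filter fun p : F × F =>
            p.1 ^ d + c * p.2 ^ d = b ∧
            (p.1 + 1) ^ d + c⁻¹ * (p.2 + 1) ^ d = b).card : ℤ) =
      ∑ α : F, ∑ β : F,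
        chi n (b * (α + β)) *
          (∑ x : F, chi n (α * x ^ d + β * (x + 1) ^ d)) *
          (∑ x : F, chi n (c * α * x ^ d + c⁻¹ * β * (x + 1) ^ d)) :=
  cBCT_entry_as_double_weil_sum_general n d hn hcard c b
end

section
/- Let n ≥ 2 and 1 ≤ k < n with e = gcd(k, n), and suppose n/e is odd. Let c ∈ F_{2^e} \ {0, 1}. With the sets F and F' defined as follows — for (α, β) ∈ F_q × F_q write A = α + β, B = β^{2^{n−k}} + β, A' = c·α + c^{−1}·β, B' = (c^{−1}β)^{2^{n−k}} + c^{−1}β, let γ, γ' be the unique elements with γ^{2^k+1} = A and (γ')^{2^k+1} = A', and set F = {(α,β) : A ≠ 0, B ≠ 0, Tr_e(B·γ^{−1}) = 1} and F' = {(α,β) : A' ≠ 0, B' ≠ 0, Tr_e(B'·(γ')^{−1}) = 1} — for every b ∈ F_q^*, the number N of pairs (x, y) ∈ F_q × F_q with x^{2^k+1} + c·y^{2^k+1} = b and (x+1)^{2^k+1} + c^{−1}·(y+1)^{2^k+1} = b satisfies 2^n·N ≤ 2^n + 2^e·|F ∩ F'|. -/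
/-!
Write `ψ(x) = (-1)^{Tr(x)}` and `W(A, B) = ∑ₓ ψ(A x^{2^k+1} + B x)`. Detecting both equations
with `ψ` and summing over `x` and `y` separately gives
`2^{2n} N = ∑_{α,β} ψ(b(α+β)) ψ(β) W(α+β, B) ψ(c⁻¹β) W(cα+c⁻¹β, B')`,
whose term at `(α, β) = 0` is `2^{2n}`.

Squaring and summing over `x` first, `W(A, B)² = 2^n ∑ ψ(A w^{2^k+1} + B w)`, the sum running over
the roots of the linearized polynomial `(A w)^{2^{n-k}} + A w^{2^k}`. Because `n / e` is odd,
`gcd(2k, n) = e`, so these roots are `γ⁻¹ F_{2^e}` with `γ^{2^k+1} = A`, and on them the summand is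
the character `u ↦ ψ(u (1 + Tr_e(B/γ)))` of `F_{2^e}`. Hence `W(A, B)² ≤ 2^{n+e}`, and `W(A, B) = 0`
unless `Tr_e(B/γ) = 1`. Every term with `(α, β) ≠ 0` therefore vanishes outside `F ∩ F'` (the
degenerate cases `A = 0` or `B = 0` force one of the two Weil sums to vanish, using `c ≠ 1`) and
is at most `2^{n+e}` on it.
-/

open Finset

/-- The relative trace `Tr_e : F → F_{2^e}`, viewed inside `F`. -/
def relTr (n e : ℕ) {F : Type*} [Field F] (x : F) : F :=
  ∑ i ∈ Finset.range (n / e), x ^ (2 ^ (e * i))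

theorem Nat.gcd_two_mul_of_odd_div_gcd {k n : ℕ} (h : Odd (n / k.gcd n)) :
    (2 * k).gcd n = k.gcd n := by
  rcases Nat.eq_zero_or_pos (k.gcd n) with h0 | hpos
  · obtain ⟨rfl, rfl⟩ := Nat.gcd_eq_zero_iff.1 h0
    rfl
  have hk := Nat.mul_div_cancel' (Nat.gcd_dvd_left k n)
  have hn := Nat.mul_div_cancel' (Nat.gcd_dvd_right k n)
  calc (2 * k).gcd n = (k.gcd n * (2 * (k / k.gcd n))).gcd (k.gcd n * (n / k.gcd n)) := by
        rw [hn, mul_left_comm, hk]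
    _ = k.gcd n * (k / k.gcd n).gcd (n / k.gcd n) := by
        rw [Nat.gcd_mul_left, Nat.Coprime.gcd_mul_left_cancel _ (Nat.coprime_two_left.2 h)]
    _ = k.gcd n := by rw [Nat.coprime_div_gcd_div_gcd hpos, mul_one]

theorem Nat.coprime_two_pow_add_one_two_pow_sub_one {k n : ℕ} (hn : n ≠ 0)
    (h : Odd (n / k.gcd n)) : (2 ^ k + 1).Coprime (2 ^ n - 1) := by
  set d := (2 ^ k + 1).gcd (2 ^ n - 1)
  have hd_sq : d ∣ 2 ^ (2 * k) - 1 :=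
    (Nat.gcd_dvd_left _ _).trans ⟨2 ^ k - 1, by rw [pow_mul', ← Nat.sq_sub_sq, one_pow]⟩
  have hd_sub : d ∣ 2 ^ k - 1 := by
    have hd : d ∣ 2 ^ k.gcd n - 1 := by
      rw [← Nat.gcd_two_mul_of_odd_div_gcd h, ← Nat.pow_sub_one_gcd_pow_sub_one]
      exact Nat.dvd_gcd hd_sq (Nat.gcd_dvd_right _ _)
    refine hd.trans ?_
    obtain ⟨j, hj⟩ := Nat.gcd_dvd_left k n
    nth_rewrite 2 [hj]
    rw [pow_mul]
    exact Nat.sub_one_dvd_pow_sub_one _ _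
  have hd_two : d ∣ 2 := by
    have := Nat.dvd_sub (Nat.gcd_dvd_left _ _) hd_sub
    rwa [show 2 ^ k + 1 - (2 ^ k - 1) = 2 by have := @Nat.one_le_two_pow k; omega] at this
  have hodd : Odd (2 ^ n - 1) :=
    Nat.Even.sub_odd Nat.one_le_two_pow (Nat.even_pow.2 ⟨even_two, hn⟩) odd_one
  exact Nat.Coprime.eq_one_of_dvd (Nat.Coprime.coprime_dvd_left hd_two
    (Nat.coprime_two_left.2 hodd)) (Nat.gcd_dvd_right _ _)

theorem pow_pow_eq_self_of_dvd {M : Type*} [Monoid M] {x : M} {p e m : ℕ} (hx : x ^ p ^ e = x)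
    (h : e ∣ m) : x ^ p ^ m = x := by
  obtain ⟨i, rfl⟩ := h
  induction i with
  | zero => simp
  | succ i ih => rw [mul_add_one, pow_add, pow_mul, ih, hx]

section FiniteField

variable {F : Type*} [Field F] [Fintype F]

theorem pow_injective_of_coprime_card_sub_one {m : ℕ} (hm : m ≠ 0)
    (h : m.Coprime (Fintype.card F - 1)) : Function.Injective fun x : F => x ^ m := by
  intro x y hxy
  simp only at hxy
  rcases eq_or_ne y 0 with rfl | hy
  · simpa [zero_pow hm, hm] using hxy
  have hx : x ≠ 0 := by
    rintro rfl
    exact hy (pow_eq_zero_iff hm |>.1 (by simpa [zero_pow hm] using hxy.symm))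
  have hc : (Nat.card Fˣ).Coprime m := by
    rw [Nat.card_units, Nat.card_eq_fintype_card]; exact h.symm
  have := (powCoprime hc).injective (a₁ := Units.mk0 x hx) (a₂ := Units.mk0 y hy)
    (Units.ext (by simpa using hxy))
  simpa using congrArg Units.val this

theorem pow_pow_eq_self_iff_gcd {p n m : ℕ} (hp : 0 < p) (hcard : Fintype.card F = p ^ n)
    {x : F} : x ^ p ^ m = x ↔ x ^ p ^ m.gcd n = x := by
  refine ⟨fun hx => ?_, fun hx => pow_pow_eq_self_of_dvd hx (Nat.gcd_dvd_left m n)⟩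
  rcases eq_or_ne x 0 with rfl | hx0
  · exact zero_pow (pow_ne_zero _ hp.ne')
  have key (l : ℕ) : x ^ p ^ l = x ↔ x ^ (p ^ l - 1) = 1 := by
    rw [← mul_eq_right₀ hx0, ← pow_succ, Nat.sub_add_cancel (Nat.one_le_pow _ _ hp)]
  rw [key] at hx ⊢
  have hq : x ^ (p ^ n - 1) = 1 := hcard ▸ FiniteField.pow_card_sub_one_eq_one x hx0
  rw [← orderOf_dvd_iff_pow_eq_one, ← Nat.pow_sub_one_gcd_pow_sub_one] at *
  exact Nat.dvd_gcd hx hq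

theorem bijective_pow_two_pow_add_one {n k : ℕ} (hcard : Fintype.card F = 2 ^ n) (hn : n ≠ 0)
    (hodd : Odd (n / k.gcd n)) :
    Function.Bijective fun x : F => x ^ (2 ^ k + 1) := by
  have hinj := pow_injective_of_coprime_card_sub_one (F := F) (Nat.succ_ne_zero _)
    (hcard ▸ Nat.coprime_two_pow_add_one_two_pow_sub_one hn hodd)
  exact ⟨hinj, Finite.injective_iff_surjective.1 hinj⟩

variable [DecidableEq F]

theorem card_filter_pow_eq_self_le {m : ℕ} (hm : 1 < m) : #{x : F | x ^ m = x} ≤ m := by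
  refine (FiniteField.X_pow_card_sub_X_natDegree_eq F hm).le.trans' <|
    Polynomial.card_le_degree_of_subset_roots fun x hx => ?_
  rw [Polynomial.mem_roots (FiniteField.X_pow_card_sub_X_ne_zero F hm)]
  simpa [sub_eq_zero] using hx

end FiniteField

theorem AddChar.sq_eq_one_of_charTwo {R M : Type*} [Ring R] [CharP R 2] [Monoid M]
    (ψ : AddChar R M) (x : R) : ψ x ^ 2 = 1 := by
  rw [sq, ← AddChar.map_add_eq_mul, CharTwo.add_self_eq_zero, AddChar.map_zero_eq_one]

section Trace

variable {F : Type*} [Field F] {n e : ℕ}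

theorem relTr_mul_of_pow_eq_self {u : F} (hu : u ^ 2 ^ e = u) (x : F) :
    relTr n e (u * x) = u * relTr n e x := by
  simp only [relTr, mul_sum, mul_pow, pow_pow_eq_self_of_dvd hu (dvd_mul_right e _)]

variable [CharP F 2]

theorem relTr_add (x y : F) : relTr n e (x + y) = relTr n e x + relTr n e y := by
  simp only [relTr, ← sum_add_distrib, add_pow_char_pow]

theorem relTr_sum {ι : Type*} (s : Finset ι) (f : ι → F) :
    relTr n e (∑ i ∈ s, f i) = ∑ i ∈ s, relTr n e (f i) := by
  simp only [relTr, sum_pow_char_pow]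
  exact sum_comm

theorem relTr_pow_two_pow (x : F) (m : ℕ) : relTr n e x ^ 2 ^ m = relTr n e (x ^ 2 ^ m) := by
  simp only [relTr, sum_pow_char_pow, ← pow_mul, mul_comm]

theorem relTr_apply_one (hodd : Odd (n / e)) : relTr n e (1 : F) = 1 := by
  simp [relTr, CharTwo.natCast_eq_ite, Nat.not_even_iff_odd.2 hodd]

theorem gold_add_gold_translate (k : ℕ) (A B x w : F) :
    A * x ^ (2 ^ k + 1) + B * x + (A * (x + w) ^ (2 ^ k + 1) + B * (x + w)) =
      A * w ^ (2 ^ k + 1) + B * w + (A * w * x ^ 2 ^ k + A * w ^ 2 ^ k * x) := by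
  rw [pow_succ, pow_succ, pow_succ, add_pow_char_pow]
  linear_combination (A * x ^ 2 ^ k * x + B * x) * CharTwo.two_eq_zero (R := F)

theorem add_inv_ne_zero_of_ne_one {c : F} (hc0 : c ≠ 0) (hc1 : c ≠ 1) : c + c⁻¹ ≠ 0 := by
  rw [Ne, CharTwo.add_eq_zero, ← mul_eq_one_iff_eq_inv₀ hc0, mul_self_eq_one_iff, CharTwo.neg_eq,
    or_self]
  exact hc1

variable [Fintype F]

theorem relTr_pow_two_pow_self (hcard : Fintype.card F = 2 ^ n) (hen : e ∣ n) (x : F) :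
    relTr n e x ^ 2 ^ e = relTr n e x := by
  have hx : x ^ 2 ^ (e * (n / e)) = x ^ 2 ^ (e * 0) := by
    rw [Nat.mul_div_cancel' hen, ← hcard, FiniteField.pow_card, mul_zero, pow_zero, pow_one]
  have hterm (i : ℕ) : (x ^ 2 ^ e) ^ 2 ^ (e * i) = x ^ 2 ^ (e * (i + 1)) := by
    rw [← pow_mul, ← pow_add, mul_add_one, add_comm]
  rw [relTr_pow_two_pow, relTr, relTr]
  simp_rw [hterm]
  rw [← add_left_inj (x ^ 2 ^ (e * 0)), ← sum_range_succ' (fun i => x ^ 2 ^ (e * i)),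
    sum_range_succ, hx]

theorem relTr_one_pow_two_pow (hcard : Fintype.card F = 2 ^ n) (x : F) (m : ℕ) :
    relTr n 1 (x ^ 2 ^ m) = relTr n 1 x := by
  rw [← relTr_pow_two_pow]
  exact pow_pow_eq_self_of_dvd (relTr_pow_two_pow_self hcard (one_dvd n) x) (one_dvd m)

theorem relTr_one_relTr (hcard : Fintype.card F = 2 ^ n) (hodd : Odd (n / e)) (x : F) :
    relTr n 1 (relTr n e x) = relTr n 1 x := by
  rw [show relTr n e x = ∑ i ∈ range (n / e), x ^ 2 ^ (e * i) from rfl, relTr_sum]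
  simp [relTr_one_pow_two_pow hcard, CharTwo.natCast_eq_ite, Nat.not_even_iff_odd.2 hodd]

theorem relTr_one_eq_zero_or_one (hcard : Fintype.card F = 2 ^ n) (x : F) :
    relTr n 1 x = 0 ∨ relTr n 1 x = 1 := by
  have h := relTr_pow_two_pow_self hcard (one_dvd n) x
  rw [pow_one, sq] at h
  exact (mul_left_eq_self₀.1 h).symm

open Polynomial in
theorem exists_relTr_one_eq_one (hcard : Fintype.card F = 2 ^ n) (hn : n ≠ 0) :
    ∃ x : F, relTr n 1 x = 1 := by
  set f : F[X] := ∑ j ∈ range n, X ^ 2 ^ j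
  have hf : f ≠ 0 := by
    intro h
    have := congrArg (coeff · 1) h
    simp [f, coeff_X_pow, eq_comm (a := 1), Nat.pos_of_ne_zero hn] at this
  have hdeg : f.natDegree < Cardinal.mk F := by
    rw [Cardinal.mk_fintype, hcard, Nat.cast_lt]
    refine (natDegree_sum_le_of_forall_le _ _ fun j hj => ?_).trans_lt
      (Nat.pow_lt_pow_right one_lt_two (Nat.sub_one_lt hn))
    rw [natDegree_X_pow]
    exact Nat.pow_le_pow_right two_pos (Nat.le_sub_one_of_lt (mem_range.1 hj))
  obtain ⟨x, hx⟩ := exists_eval_ne_zero_of_natDegree_lt_card f hf hdeg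
  refine ⟨x, (relTr_one_eq_zero_or_one hcard x).resolve_left ?_⟩
  simpa [f, relTr, eval_finsetSum] using hx

theorem linearized_eq_zero_iff {k : ℕ} (hcard : Fintype.card F = 2 ^ n) (hkn : k ≤ n) {γ : F}
    (hγ : γ ≠ 0) (w : F) :
    (γ ^ (2 ^ k + 1) * w) ^ 2 ^ (n - k) + γ ^ (2 ^ k + 1) * w ^ 2 ^ k = 0 ↔
      (γ * w) ^ 2 ^ (2 * k) = γ * w := by
  have hq (y : F) : y ^ 2 ^ n = y := hcard ▸ FiniteField.pow_card y
  have key : ((γ ^ (2 ^ k + 1) * w) ^ 2 ^ (n - k) + γ ^ (2 ^ k + 1) * w ^ 2 ^ k) ^ 2 ^ k =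
      γ ^ 2 ^ k * (γ * w + (γ * w) ^ 2 ^ (2 * k)) := by
    rw [add_pow_char_pow, ← pow_mul, ← pow_add, Nat.sub_add_cancel hkn, hq, two_mul, pow_add]
    ring
  rw [← pow_eq_zero_iff (pow_ne_zero k two_ne_zero), key, mul_eq_zero,
    or_iff_right (pow_ne_zero _ hγ), CharTwo.add_eq_zero, eq_comm]

theorem pow_two_pow_sub_add_self_eq_zero_iff {k : ℕ} (hcard : Fintype.card F = 2 ^ n) (hkn : k ≤ n)
    (he : e = k.gcd n) (u : F) :
    u ^ 2 ^ (n - k) + u = 0 ↔ u ^ 2 ^ e = u := by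
  rw [CharTwo.add_eq_zero, pow_pow_eq_self_iff_gcd two_pos hcard, Nat.gcd_self_sub_left hkn, he]

end Trace

section TraceChar

variable {F : Type*} [Field F] [CharP F 2] [Fintype F] [DecidableEq F] {n : ℕ}

def traceChar (hcard : Fintype.card F = 2 ^ n) : AddChar F ℤ where
  toFun x := if relTr n 1 x = 0 then 1 else -1
  map_zero_eq_one' := by simp [relTr]
  map_add_eq_mul' x y := by
    rw [relTr_add]
    rcases relTr_one_eq_zero_or_one hcard x with hx | hx <;>
      rcases relTr_one_eq_zero_or_one hcard y with hy | hy <;>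
      simp [hx, hy, CharTwo.add_self_eq_zero]

variable (hcard : Fintype.card F = 2 ^ n)

theorem traceChar_apply (x : F) :
    traceChar hcard x = if relTr n 1 x = 0 then 1 else -1 := rfl

theorem traceChar_pow_two_pow (x : F) (m : ℕ) :
    traceChar hcard (x ^ 2 ^ m) = traceChar hcard x := by
  simp only [traceChar_apply, relTr_one_pow_two_pow hcard]

theorem traceChar_isPrimitive (hn : n ≠ 0) : (traceChar hcard).IsPrimitive := by
  intro a ha h
  obtain ⟨x, hx⟩ := exists_relTr_one_eq_one hcard hn
  have := DFunLike.congr_fun h (a⁻¹ * x)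
  simp [AddChar.mulShift_apply, ← mul_assoc, mul_inv_cancel₀ ha, traceChar_apply, hx] at this

theorem sum_traceChar_mul (hn : n ≠ 0) (t : F) :
    ∑ x, traceChar hcard (x * t) = if t = 0 then 2 ^ n else 0 := by
  rw [AddChar.sum_mulShift t (traceChar_isPrimitive hcard hn), hcard]
  split_ifs <;> simp

variable {e : ℕ}

theorem traceChar_mul_relTr (hodd : Odd (n / e)) {u : F} (hu : u ^ 2 ^ e = u) (z : F) :
    traceChar hcard (u * relTr n e z) = traceChar hcard (u * z) := by
  simp only [traceChar_apply, ← relTr_mul_of_pow_eq_self hu, relTr_one_relTr hcard hodd]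

theorem sum_traceChar_mul_subfield (hn : n ≠ 0) (hodd : Odd (n / e)) (hen : e ∣ n) {s : F}
    (hs : s ^ 2 ^ e = s) :
    ∑ u ∈ {u : F | u ^ 2 ^ e = u}, traceChar hcard (u * s) =
      if s = 0 then (#{u : F | u ^ 2 ^ e = u} : ℤ) else 0 := by
  split_ifs with h0
  · simp [h0]
  obtain ⟨x, hx⟩ := exists_relTr_one_eq_one hcard hn
  set u₀ := relTr n e x * s⁻¹
  have hu₀ : u₀ ^ 2 ^ e = u₀ := by rw [mul_pow, inv_pow, hs, relTr_pow_two_pow_self hcard hen]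
  have hψ : traceChar hcard (u₀ * s) = -1 := by
    rw [inv_mul_cancel_right₀ h0, ← one_mul (relTr n e x),
      traceChar_mul_relTr hcard hodd (one_pow _), one_mul, traceChar_apply, hx]
    simp
  -- translating by `u₀` permutes the subfield and flips the sign of every term
  have hshift : ∑ u ∈ {u : F | u ^ 2 ^ e = u}, traceChar hcard ((u + u₀) * s) =
      ∑ u ∈ {u : F | u ^ 2 ^ e = u}, traceChar hcard (u * s) :=
    sum_equiv (Equiv.addRight u₀) (fun u => by simp [add_pow_char_pow, hu₀]) fun _ _ => rfl
  simp only [add_mul, AddChar.map_add_eq_mul, hψ, mul_neg_one, sum_neg_distrib] at hshift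
  omega

end TraceChar

section WeilSum

variable {F : Type*} [Field F] [CharP F 2] [Fintype F] [DecidableEq F] {n k e : ℕ}
  (hcard : Fintype.card F = 2 ^ n)

def weilSum (k : ℕ) (A B : F) : ℤ := ∑ x, traceChar hcard (A * x ^ (2 ^ k + 1) + B * x)

theorem weilSum_zero_left (hn : n ≠ 0) (B : F) :
    weilSum hcard k 0 B = if B = 0 then 2 ^ n else 0 := by
  simp only [weilSum, zero_mul, zero_add, mul_comm B]
  exact sum_traceChar_mul hcard hn B

theorem traceChar_mul_pow_two_pow (hkn : k ≤ n) (a x : F) :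
    traceChar hcard (a * x ^ 2 ^ k) = traceChar hcard (a ^ 2 ^ (n - k) * x) := by
  rw [← traceChar_pow_two_pow hcard _ (n - k), mul_pow, ← pow_mul, ← pow_add,
    Nat.add_sub_cancel' hkn, ← hcard, FiniteField.pow_card]

theorem weilSum_sq_eq_sum_ker (hn : n ≠ 0) (hkn : k ≤ n) (A B : F) :
    weilSum hcard k A B ^ 2 = 2 ^ n * ∑ w ∈ {w : F | (A * w) ^ 2 ^ (n - k) + A * w ^ 2 ^ k = 0},
      traceChar hcard (A * w ^ (2 ^ k + 1) + B * w) := by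
  have hsplit (x w : F) :
      traceChar hcard (A * x ^ (2 ^ k + 1) + B * x) *
          traceChar hcard (A * (x + w) ^ (2 ^ k + 1) + B * (x + w)) =
        traceChar hcard (A * w ^ (2 ^ k + 1) + B * w) *
          traceChar hcard (x * ((A * w) ^ 2 ^ (n - k) + A * w ^ 2 ^ k)) := by
    rw [← AddChar.map_add_eq_mul, gold_add_gold_translate, AddChar.map_add_eq_mul]
    congr 1
    rw [AddChar.map_add_eq_mul, traceChar_mul_pow_two_pow hcard hkn, ← AddChar.map_add_eq_mul]
    ring_nf
  calc weilSum hcard k A B ^ 2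
      = ∑ x, ∑ w, traceChar hcard (A * x ^ (2 ^ k + 1) + B * x) *
          traceChar hcard (A * (x + w) ^ (2 ^ k + 1) + B * (x + w)) := by
        rw [sq, weilSum, sum_mul_sum]
        exact sum_congr rfl fun x _ =>
          (Fintype.sum_equiv (Equiv.addLeft x) _ _ fun _ => rfl).symm
    _ = ∑ w, traceChar hcard (A * w ^ (2 ^ k + 1) + B * w) *
          ∑ x, traceChar hcard (x * ((A * w) ^ 2 ^ (n - k) + A * w ^ 2 ^ k)) := by
        simp_rw [hsplit]
        rw [sum_comm]
        simp_rw [← mul_sum]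
    _ = _ := by
        simp_rw [sum_traceChar_mul hcard hn, mul_ite, mul_zero, sum_filter, mul_sum, mul_ite,
          mul_zero, mul_comm]

theorem weilSum_sq (hn : n ≠ 0) (hkn : k ≤ n) (he : e = k.gcd n) (hodd : Odd (n / e)) {γ : F}
    (hγ : γ ≠ 0) (B : F) :
    weilSum hcard k (γ ^ (2 ^ k + 1)) B ^ 2 =
      if relTr n e (B * γ⁻¹) = 1 then 2 ^ n * (#{u : F | u ^ 2 ^ e = u} : ℤ) else 0 := by
  have hen : e ∣ n := he ▸ Nat.gcd_dvd_right k n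
  have hek : e ∣ k := he ▸ Nat.gcd_dvd_left k n
  set s := 1 + relTr n e (B * γ⁻¹)
  have hs : s ^ 2 ^ e = s := by
    rw [add_pow_char_pow, one_pow, relTr_pow_two_pow_self hcard hen]
  have hmem (w : F) : (γ ^ (2 ^ k + 1) * w) ^ 2 ^ (n - k) + γ ^ (2 ^ k + 1) * w ^ 2 ^ k = 0 ↔
      (γ * w) ^ 2 ^ e = γ * w := by
    rw [linearized_eq_zero_iff hcard hkn hγ, pow_pow_eq_self_iff_gcd two_pos hcard,
      Nat.gcd_two_mul_of_odd_div_gcd (he ▸ hodd), he]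
  -- on the kernel, `w = γ⁻¹ u` with `u ∈ F_{2^e}`, and the summand becomes linear in `u`
  have hterm (w : F) (hw : (γ * w) ^ 2 ^ e = γ * w) :
      traceChar hcard (γ ^ (2 ^ k + 1) * w ^ (2 ^ k + 1) + B * w) =
        traceChar hcard (γ * w * s) := by
    have hsplit : γ ^ (2 ^ k + 1) * w ^ (2 ^ k + 1) + B * w =
        (γ * w) ^ 2 ^ 1 + γ * w * (B * γ⁻¹) := by
      rw [← mul_pow, pow_succ, pow_pow_eq_self_of_dvd hw hek]
      field_simp
      ring
    rw [hsplit, AddChar.map_add_eq_mul, traceChar_pow_two_pow, ← mul_one (γ * w),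
      ← AddChar.map_add_eq_mul, mul_one, ← mul_one_add, ← traceChar_mul_relTr hcard hodd hw,
      relTr_add, relTr_apply_one hodd]
  rw [weilSum_sq_eq_sum_ker hcard hn hkn,
    sum_equiv (Equiv.mulLeft₀ γ hγ) (t := {u : F | u ^ 2 ^ e = u})
      (g := fun u => traceChar hcard (u * s)) (by simp [hmem])
      fun w hw => hterm w (by simpa [hmem] using hw),
    sum_traceChar_mul_subfield hcard hn hodd hen hs]
  simp only [s, CharTwo.add_eq_zero, eq_comm (a := (1 : F))]
  split_ifs <;> simp

/-- The condition defining the sets `F` and `F'`, for `A = α + β`, `B = β ^ 2 ^ (n - k) + β`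
and for their primed versions. -/
def IsTraceOnePair (n k e : ℕ) (A B : F) : Prop :=
  A ≠ 0 ∧ B ≠ 0 ∧ ∃ γ : F, γ ^ (2 ^ k + 1) = A ∧ relTr n e (B * γ⁻¹) = 1

theorem weilSum_eq_zero_of_not_isTraceOnePair (hn : n ≠ 0) (hkn : k ≤ n) (he : e = k.gcd n)
    (hodd : Odd (n / e)) {A B : F} (hA : A ≠ 0) (h : ¬IsTraceOnePair n k e A B) :
    weilSum hcard k A B = 0 := by
  obtain ⟨γ, rfl⟩ : ∃ γ : F, γ ^ (2 ^ k + 1) = A :=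
    (bijective_pow_two_pow_add_one hcard hn (he ▸ hodd)).2 A
  have hγ : γ ≠ 0 := by rintro rfl; simp at hA
  have hsq := weilSum_sq hcard hn hkn he hodd hγ B
  rwa [if_neg, sq_eq_zero_iff] at hsq
  intro htr
  refine h ⟨hA, ?_, γ, rfl, htr⟩
  rintro rfl
  simp [relTr] at htr

theorem weilSum_sq_le (hn : n ≠ 0) (hkn : k ≤ n) (he : e = k.gcd n) (hodd : Odd (n / e))
    {A : F} (hA : A ≠ 0) (B : F) : weilSum hcard k A B ^ 2 ≤ 2 ^ (n + e) := by
  obtain ⟨γ, rfl⟩ : ∃ γ : F, γ ^ (2 ^ k + 1) = A :=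
    (bijective_pow_two_pow_add_one hcard hn (he ▸ hodd)).2 A
  have hγ : γ ≠ 0 := by rintro rfl; simp at hA
  have he0 : e ≠ 0 := he ▸ (Nat.gcd_pos_of_pos_right k (Nat.pos_of_ne_zero hn)).ne'
  rw [weilSum_sq hcard hn hkn he hodd hγ B, pow_add]
  split_ifs
  · gcongr
    exact_mod_cast card_filter_pow_eq_self_le (F := F) (Nat.one_lt_two_pow he0)
  · positivity

end WeilSum

section CBCT

variable {F : Type*} [Field F] [CharP F 2] [Fintype F] [DecidableEq F] {n k e : ℕ}
  (hcard : Fintype.card F = 2 ^ n)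

theorem sum_traceChar_gold_add_one (hkn : k ≤ n) (α β : F) :
    ∑ x, traceChar hcard (α * x ^ (2 ^ k + 1) + β * (x + 1) ^ (2 ^ k + 1)) =
      traceChar hcard β * weilSum hcard k (α + β) (β ^ 2 ^ (n - k) + β) := by
  have hexp (x : F) : α * x ^ (2 ^ k + 1) + β * (x + 1) ^ (2 ^ k + 1) =
      β + ((α + β) * x ^ (2 ^ k + 1) + β * x) + β * x ^ 2 ^ k := by
    rw [pow_succ, pow_succ, add_pow_char_pow, one_pow]
    ring
  rw [weilSum, mul_sum]
  refine sum_congr rfl fun x _ => ?_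
  rw [hexp, AddChar.map_add_eq_mul, AddChar.map_add_eq_mul, traceChar_mul_pow_two_pow hcard hkn,
    mul_assoc, ← AddChar.map_add_eq_mul]
  ring_nf

def cBCTTerm (k : ℕ) (c b α β : F) : ℤ :=
  traceChar hcard (b * (α + β)) *
    (traceChar hcard β * weilSum hcard k (α + β) (β ^ 2 ^ (n - k) + β)) *
    (traceChar hcard (c⁻¹ * β) *
      weilSum hcard k (c * α + c⁻¹ * β) ((c⁻¹ * β) ^ 2 ^ (n - k) + c⁻¹ * β))

theorem sum_traceChar_mul_traceChar_eq_cBCTTerm (hkn : k ≤ n) (c b α β : F) :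
    ∑ p : F × F, traceChar hcard (α * (p.1 ^ (2 ^ k + 1) + c * p.2 ^ (2 ^ k + 1) + b)) *
        traceChar hcard (β * ((p.1 + 1) ^ (2 ^ k + 1) + c⁻¹ * (p.2 + 1) ^ (2 ^ k + 1) + b)) =
      cBCTTerm hcard k c b α β := by
  have hfac (x y : F) :
      traceChar hcard (α * (x ^ (2 ^ k + 1) + c * y ^ (2 ^ k + 1) + b)) *
        traceChar hcard (β * ((x + 1) ^ (2 ^ k + 1) + c⁻¹ * (y + 1) ^ (2 ^ k + 1) + b)) =
      traceChar hcard (b * (α + β)) *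
        (traceChar hcard (α * x ^ (2 ^ k + 1) + β * (x + 1) ^ (2 ^ k + 1)) *
          traceChar hcard (c * α * y ^ (2 ^ k + 1) + c⁻¹ * β * (y + 1) ^ (2 ^ k + 1))) := by
    simp_rw [← AddChar.map_add_eq_mul]
    ring_nf
  rw [Fintype.sum_prod_type]
  simp_rw [hfac, ← mul_sum, ← sum_mul]
  rw [sum_traceChar_gold_add_one hcard hkn, sum_traceChar_gold_add_one hcard hkn, cBCTTerm]
  ring

theorem card_mul_eq_sum_cBCTTerm (hn : n ≠ 0) (hkn : k ≤ n) (c b : F) :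
    2 ^ n * 2 ^ n * (#{p : F × F | p.1 ^ (2 ^ k + 1) + c * p.2 ^ (2 ^ k + 1) = b ∧
        (p.1 + 1) ^ (2 ^ k + 1) + c⁻¹ * (p.2 + 1) ^ (2 ^ k + 1) = b} : ℤ) =
      ∑ p : F × F, cBCTTerm hcard k c b p.1 p.2 := by
  have hind (X : F) : (if X = b then (2 : ℤ) ^ n else 0) = ∑ α, traceChar hcard (α * (X + b)) := by
    simp only [sum_traceChar_mul hcard hn, CharTwo.add_eq_zero]
  calc 2 ^ n * 2 ^ n * (#{p : F × F | p.1 ^ (2 ^ k + 1) + c * p.2 ^ (2 ^ k + 1) = b ∧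
        (p.1 + 1) ^ (2 ^ k + 1) + c⁻¹ * (p.2 + 1) ^ (2 ^ k + 1) = b} : ℤ)
      = ∑ p : F × F, (if p.1 ^ (2 ^ k + 1) + c * p.2 ^ (2 ^ k + 1) = b then (2 : ℤ) ^ n else 0) *
          (if (p.1 + 1) ^ (2 ^ k + 1) + c⁻¹ * (p.2 + 1) ^ (2 ^ k + 1) = b then 2 ^ n else 0) := by
        simp_rw [natCast_card_filter, mul_sum, ite_zero_mul_ite_zero, mul_ite, mul_one, mul_zero]
    _ = ∑ α, ∑ β, ∑ p : F × F,
          traceChar hcard (α * (p.1 ^ (2 ^ k + 1) + c * p.2 ^ (2 ^ k + 1) + b)) *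
            traceChar hcard
              (β * ((p.1 + 1) ^ (2 ^ k + 1) + c⁻¹ * (p.2 + 1) ^ (2 ^ k + 1) + b)) := by
        simp_rw [hind, sum_mul_sum]
        rw [sum_comm]
        exact sum_congr rfl fun _ _ => sum_comm
    _ = ∑ p : F × F, cBCTTerm hcard k c b p.1 p.2 := by
        simp_rw [sum_traceChar_mul_traceChar_eq_cBCTTerm hcard hkn]
        exact (Fintype.sum_prod_type fun p => cBCTTerm hcard k c b p.1 p.2).symm

theorem cBCTTerm_zero_zero (hn : n ≠ 0) (c b : F) :
    cBCTTerm hcard k c b 0 0 = 2 ^ n * 2 ^ n := by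
  simp [cBCTTerm, weilSum_zero_left hcard hn]

theorem weilSum_mul_weilSum_eq_zero (hn : n ≠ 0) (hkn : k ≤ n) (he : e = k.gcd n)
    (hodd : Odd (n / e)) {c : F} (hc0 : c ≠ 0) (hc1 : c ≠ 1) (hce : c ^ 2 ^ e = c) {α β : F}
    (hαβ : (α, β) ≠ 0)
    (h : ¬(IsTraceOnePair n k e (α + β) (β ^ 2 ^ (n - k) + β) ∧
      IsTraceOnePair n k e (c * α + c⁻¹ * β) ((c⁻¹ * β) ^ 2 ^ (n - k) + c⁻¹ * β))) :
    weilSum hcard k (α + β) (β ^ 2 ^ (n - k) + β) *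
      weilSum hcard k (c * α + c⁻¹ * β) ((c⁻¹ * β) ^ 2 ^ (n - k) + c⁻¹ * β) = 0 := by
  have hfix := pow_two_pow_sub_add_self_eq_zero_iff hcard hkn he
  have hzero {A B : F} (hA : A ≠ 0) (hB : B = 0) : weilSum hcard k A B = 0 :=
    weilSum_eq_zero_of_not_isTraceOnePair hcard hn hkn he hodd hA fun h => h.2.1 hB
  have hmul {a u : F} (ha : a ^ 2 ^ e = a) (hu : u ^ 2 ^ e = u) : (a * u) ^ 2 ^ e = a * u := by
    rw [mul_pow, ha, hu]
  have hc_inv : c⁻¹ ^ 2 ^ e = c⁻¹ := by rw [inv_pow, hce]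
  by_cases hA₁ : α + β = 0
  · rw [hA₁, weilSum_zero_left hcard hn]
    split_ifs with hB₁
    · -- `α = β ∈ F_{2^e}`, so the second Weil sum has `A' ≠ 0` and `B' = 0`
      have hαβ' : α = β := CharTwo.add_eq_zero.1 hA₁
      have hβ : β ≠ 0 := by rintro rfl; exact hαβ (by simp [hαβ'])
      refine mul_eq_zero_of_right _ (hzero ?_ ((hfix _).2 (hmul hc_inv ((hfix β).1 hB₁))))
      rw [hαβ', ← add_mul]
      exact mul_ne_zero (add_inv_ne_zero_of_ne_one hc0 hc1) hβ
    · exact zero_mul _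
  by_cases hA₂ : c * α + c⁻¹ * β = 0
  · rw [hA₂, weilSum_zero_left hcard hn]
    split_ifs with hB₂
    · -- then `β = c · (c⁻¹ β) ∈ F_{2^e}`, so the first Weil sum has `B = 0`
      have hβ := hmul hce ((hfix _).1 hB₂)
      rw [mul_inv_cancel_left₀ hc0] at hβ
      exact mul_eq_zero_of_left (hzero hA₁ ((hfix β).2 hβ)) _
    · exact mul_zero _
  rcases not_and_or.1 h with h₁ | h₂
  · rw [weilSum_eq_zero_of_not_isTraceOnePair hcard hn hkn he hodd hA₁ h₁, zero_mul]
  · rw [weilSum_eq_zero_of_not_isTraceOnePair hcard hn hkn he hodd hA₂ h₂, mul_zero]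

theorem cBCTTerm_eq_zero (hn : n ≠ 0) (hkn : k ≤ n) (he : e = k.gcd n)
    (hodd : Odd (n / e)) {c : F} (hc0 : c ≠ 0) (hc1 : c ≠ 1) (hce : c ^ 2 ^ e = c) (b : F)
    {α β : F} (hαβ : (α, β) ≠ 0)
    (h : ¬(IsTraceOnePair n k e (α + β) (β ^ 2 ^ (n - k) + β) ∧
      IsTraceOnePair n k e (c * α + c⁻¹ * β) ((c⁻¹ * β) ^ 2 ^ (n - k) + c⁻¹ * β))) :
    cBCTTerm hcard k c b α β = 0 := by
  rw [cBCTTerm]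
  linear_combination traceChar hcard (b * (α + β)) * traceChar hcard β *
    traceChar hcard (c⁻¹ * β) *
      weilSum_mul_weilSum_eq_zero hcard hn hkn he hodd hc0 hc1 hce hαβ h

theorem cBCTTerm_le (hn : n ≠ 0) (hkn : k ≤ n) (he : e = k.gcd n) (hodd : Odd (n / e))
    (c b : F) {α β : F}
    (h : IsTraceOnePair n k e (α + β) (β ^ 2 ^ (n - k) + β) ∧
      IsTraceOnePair n k e (c * α + c⁻¹ * β) ((c⁻¹ * β) ^ 2 ^ (n - k) + c⁻¹ * β)) :
    cBCTTerm hcard k c b α β ≤ 2 ^ (n + e) := by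
  have h₁ := weilSum_sq_le hcard hn hkn he hodd h.1.1 (β ^ 2 ^ (n - k) + β)
  have h₂ := weilSum_sq_le hcard hn hkn he hodd h.2.1 ((c⁻¹ * β) ^ 2 ^ (n - k) + c⁻¹ * β)
  have hsq : cBCTTerm hcard k c b α β ^ 2 ≤ (2 ^ (n + e)) ^ 2 := by
    have hψ := AddChar.sq_eq_one_of_charTwo (traceChar hcard)
    calc cBCTTerm hcard k c b α β ^ 2
        = traceChar hcard (b * (α + β)) ^ 2 * traceChar hcard β ^ 2 *
            traceChar hcard (c⁻¹ * β) ^ 2 *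
            (weilSum hcard k (α + β) (β ^ 2 ^ (n - k) + β) ^ 2 *
              weilSum hcard k (c * α + c⁻¹ * β) ((c⁻¹ * β) ^ 2 ^ (n - k) + c⁻¹ * β) ^ 2) := by
          rw [cBCTTerm]
          ring
      _ ≤ (2 ^ (n + e)) ^ 2 := by
          rw [hψ, hψ, hψ, one_mul, one_mul, one_mul, sq (2 ^ (n + e) : ℤ)]
          exact mul_le_mul h₁ h₂ (sq_nonneg _) (by positivity)
  exact (abs_le_of_sq_le_sq' hsq (by positivity)).2

theorem sum_cBCTTerm_le (hn : n ≠ 0) (hkn : k ≤ n) (he : e = k.gcd n) (hodd : Odd (n / e))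
    {c : F} (hc0 : c ≠ 0) (hc1 : c ≠ 1) (hce : c ^ 2 ^ e = c) (b : F) (G : Finset (F × F))
    (hG : ∀ p : F × F, IsTraceOnePair n k e (p.1 + p.2) (p.2 ^ 2 ^ (n - k) + p.2) ∧
      IsTraceOnePair n k e (c * p.1 + c⁻¹ * p.2) ((c⁻¹ * p.2) ^ 2 ^ (n - k) + c⁻¹ * p.2) →
        p ∈ G) :
    ∑ p : F × F, cBCTTerm hcard k c b p.1 p.2 ≤ 2 ^ n * (2 ^ n + 2 ^ e * #G) := by
  rw [mul_add, ← mul_assoc, ← pow_add (2 : ℤ) n e, ← add_sum_erase _ _ (mem_univ (0 : F × F)),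
    Prod.fst_zero, Prod.snd_zero, cBCTTerm_zero_zero hcard hn]
  gcongr
  calc ∑ p ∈ univ.erase (0 : F × F), cBCTTerm hcard k c b p.1 p.2
      ≤ ∑ p ∈ univ.erase (0 : F × F), if p ∈ G then (2 : ℤ) ^ (n + e) else 0 := by
        refine sum_le_sum fun p hp => ?_
        by_cases htp : IsTraceOnePair n k e (p.1 + p.2) (p.2 ^ 2 ^ (n - k) + p.2) ∧
            IsTraceOnePair n k e (c * p.1 + c⁻¹ * p.2) ((c⁻¹ * p.2) ^ 2 ^ (n - k) + c⁻¹ * p.2)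
        · rw [if_pos (hG p htp)]
          exact cBCTTerm_le hcard hn hkn he hodd c b htp
        · rw [cBCTTerm_eq_zero hcard hn hkn he hodd hc0 hc1 hce b (ne_of_mem_erase hp) htp]
          positivity
    _ ≤ ∑ p, if p ∈ G then (2 : ℤ) ^ (n + e) else 0 :=
        sum_le_sum_of_subset_of_nonneg (erase_subset _ _) fun _ _ _ => by positivity
    _ = 2 ^ (n + e) * #G := by rw [sum_ite_mem, univ_inter, sum_const, nsmul_eq_mul, mul_comm]

end CBCT

theorem gold_cBCT_bound_subfield_c_odd_general (n k e : ℕ) (hkn : k < n)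
    (he : e = Nat.gcd k n) (hodd : Odd (n / e))
    {F : Type*} [Field F] [Fintype F] [DecidableEq F] [CharP F 2]
    (hcard : Fintype.card F = 2 ^ n)
    (c : F) (hc0 : c ≠ 0) (hc1 : c ≠ 1) (hce : c ^ (2 ^ e) = c) :
    ∀ b : F, b ≠ 0 →
      2 ^ n *
          (Finset.univ.filter fun p : F × F =>
              p.1 ^ (2 ^ k + 1) + c * p.2 ^ (2 ^ k + 1) = b ∧
              (p.1 + 1) ^ (2 ^ k + 1) + c⁻¹ * (p.2 + 1) ^ (2 ^ k + 1) = b).card ≤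
        2 ^ n +
        2 ^ e *
        (Finset.univ.filter fun p : F × F =>
            (p.1 + p.2 ≠ 0 ∧ p.2 ^ (2 ^ (n - k)) + p.2 ≠ 0 ∧
              ∃ γ : F, γ ^ (2 ^ k + 1) = p.1 + p.2 ∧
                relTr n e ((p.2 ^ (2 ^ (n - k)) + p.2) * γ⁻¹) = 1) ∧
            (c * p.1 + c⁻¹ * p.2 ≠ 0 ∧ (c⁻¹ * p.2) ^ (2 ^ (n - k)) + c⁻¹ * p.2 ≠ 0 ∧
              ∃ γ' : F, γ' ^ (2 ^ k + 1) = c * p.1 + c⁻¹ * p.2 ∧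
                relTr n e (((c⁻¹ * p.2) ^ (2 ^ (n - k)) + c⁻¹ * p.2) * γ'⁻¹) = 1)).card := by
  intro b _
  have hn0 : n ≠ 0 := by omega
  rw [← Nat.cast_le (α := ℤ)]
  push_cast
  refine le_of_mul_le_mul_left ?_ (by positivity : (0 : ℤ) < 2 ^ n)
  rw [← mul_assoc, card_mul_eq_sum_cBCTTerm hcard hn0 hkn.le]
  exact sum_cBCTTerm_le hcard hn0 hkn.le he hodd hc0 hc1 hce b _
    fun p hp => mem_filter.2 ⟨mem_univ p, hp⟩

/-- If `n/e` is odd (`e = gcd(k,n)`) and `c ∈ F_{2^e} \ {0,1}`, then for every `b ≠ 0` the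
`c`-BCT entry `N` of the Gold function `x^{2^k+1}` at `(1,b)` satisfies
`2^n N ≤ 2^n + 2^e |F ∩ F'|`, with the sets `F, F'` as in the paper. -/
theorem gold_cBCT_bound_subfield_c_odd (n k e : ℕ) (hn : 2 ≤ n) (hk1 : 1 ≤ k) (hkn : k < n)
    (he : e = Nat.gcd k n) (hodd : Odd (n / e))
    {F : Type*} [Field F] [Fintype F] [DecidableEq F] [CharP F 2]
    (hcard : Fintype.card F = 2 ^ n)
    (c : F) (hc0 : c ≠ 0) (hc1 : c ≠ 1) (hce : c ^ (2 ^ e) = c) :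
    ∀ b : F, b ≠ 0 →
      2 ^ n *
          (Finset.univ.filter fun p : F × F =>
              p.1 ^ (2 ^ k + 1) + c * p.2 ^ (2 ^ k + 1) = b ∧
              (p.1 + 1) ^ (2 ^ k + 1) + c⁻¹ * (p.2 + 1) ^ (2 ^ k + 1) = b).card ≤
        2 ^ n +
        2 ^ e *
        (Finset.univ.filter fun p : F × F =>
            (p.1 + p.2 ≠ 0 ∧ p.2 ^ (2 ^ (n - k)) + p.2 ≠ 0 ∧
              ∃ γ : F, γ ^ (2 ^ k + 1) = p.1 + p.2 ∧
                relTr n e ((p.2 ^ (2 ^ (n - k)) + p.2) * γ⁻¹) = 1) ∧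
            (c * p.1 + c⁻¹ * p.2 ≠ 0 ∧ (c⁻¹ * p.2) ^ (2 ^ (n - k)) + c⁻¹ * p.2 ≠ 0 ∧
              ∃ γ' : F, γ' ^ (2 ^ k + 1) = c * p.1 + c⁻¹ * p.2 ∧
                relTr n e (((c⁻¹ * p.2) ^ (2 ^ (n - k)) + c⁻¹ * p.2) * γ'⁻¹) = 1)).card :=
  gold_cBCT_bound_subfield_c_odd_general n k e hkn he hodd hcard c hc0 hc1 hce
end
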